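/- arXiv:1909.07344 — 3 statements merged into one kernel-verified Lean document; each statement's English description precedes it below -/
import Mathlib

section
/- Let A be an invertible Hermitian N×N complex matrix with ‖A‖ ≤ 1, and b ∈ ℂ^N a unit vector. Define the Hamiltonian loss L_H(x) = ⟨x, A²x⟩ − |⟨b, Ax⟩|² for unit vectors x. Then L_H(x) ≥ 0 for every unit vector x, and L_H(x) = 0 if and only if x is a scalar multiple (of modulus 1 times) A⁻¹b/‖A⁻¹b‖. -/
/-!
For self-adjoint `A` and unit `b`, `L_H(x) = ‖Ax‖² − |⟨b, Ax⟩|² = ‖Ax − ⟨b, Ax⟩ b‖²` is the squared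
distance from `Ax` to the line `ℂ b`. Hence it is nonnegative and vanishes exactly when
`Ax ∈ ℂ b`, i.e. `x ∈ ℂ A⁻¹b`; the unit vectors on that line are the unit multiples of
`A⁻¹b / ‖A⁻¹b‖`.
-/

open scoped InnerProductSpace

section NormedSpace

variable {𝕜 E : Type*} [RCLike 𝕜] [NormedAddCommGroup E] [NormedSpace 𝕜 E]

theorem mem_span_singleton_iff_exists_norm_eq_one_smul {v x : E} (hx : ‖x‖ = 1) :
    x ∈ 𝕜 ∙ v ↔ ∃ c : 𝕜, ‖c‖ = 1 ∧ x = c • ((‖v‖⁻¹ : ℝ) : 𝕜) • v := by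
  constructor
  · intro hxv
    obtain ⟨a, rfl⟩ := Submodule.mem_span_singleton.1 hxv
    have hav : ‖a‖ * ‖v‖ = 1 := by rwa [norm_smul] at hx
    have hv : (‖v‖ : 𝕜) ≠ 0 := by
      exact_mod_cast right_ne_zero_of_mul_eq_one hav
    refine ⟨a * ‖v‖, by simpa using hav, ?_⟩
    rw [smul_smul, RCLike.ofReal_inv, mul_assoc, mul_inv_cancel₀ hv, mul_one]
  · rintro ⟨c, -, rfl⟩
    exact Submodule.smul_mem _ c (Submodule.smul_mem _ _ (Submodule.mem_span_singleton_self v))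

end NormedSpace

theorem apply_mem_span_singleton_iff {R M N F G : Type*} [CommSemiring R] [AddCommMonoid M]
    [Module R M] [AddCommMonoid N] [Module R N] [FunLike F M N] [LinearMapClass F R M N]
    [FunLike G N M] [LinearMapClass G R N M] {f : F} {g : G}
    (hgf : Function.LeftInverse g f) (hfg : Function.RightInverse g f) {x : M} {b : N} :
    f x ∈ R ∙ b ↔ x ∈ R ∙ g b := by
  simp only [Submodule.mem_span_singleton]
  constructor
  · rintro ⟨a, ha⟩
    exact ⟨a, by rw [← map_smul, ha, hgf x]⟩
  · rintro ⟨a, rfl⟩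
    exact ⟨a, by rw [map_smul, hfg b]⟩

section InnerProductSpace

variable {𝕜 E : Type*} [RCLike 𝕜] [NormedAddCommGroup E] [InnerProductSpace 𝕜 E]

theorem norm_sub_inner_smul_sq {b : E} (hb : ‖b‖ = 1) (y : E) :
    ‖y - ⟪b, y⟫_𝕜 • b‖ ^ 2 = ‖y‖ ^ 2 - ‖⟪b, y⟫_𝕜‖ ^ 2 := by
  rw [@norm_sub_sq 𝕜, inner_smul_right, ← inner_conj_symm, RCLike.conj_mul, norm_smul, hb,
    RCLike.norm_conj]
  norm_cast
  ring

theorem sub_inner_smul_eq_zero_iff {b : E} (hb : ‖b‖ = 1) {y : E} :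
    y - ⟪b, y⟫_𝕜 • b = 0 ↔ y ∈ 𝕜 ∙ b := by
  refine ⟨fun h ↦ Submodule.mem_span_singleton.2 ⟨_, (sub_eq_zero.1 h).symm⟩, fun hy ↦ ?_⟩
  obtain ⟨a, rfl⟩ := Submodule.mem_span_singleton.1 hy
  rw [inner_smul_right, inner_self_eq_norm_sq_to_K, hb]
  simp

end InnerProductSpace

namespace Matrix

variable {n 𝕜 : Type*} [Fintype n] [DecidableEq n] [RCLike 𝕜] {A : Matrix n n 𝕜}

theorem toEuclideanCLM_nonsing_inv_apply_apply (hA : IsUnit A) (x : EuclideanSpace 𝕜 n) :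
    toEuclideanCLM (𝕜 := 𝕜) A⁻¹ (toEuclideanCLM (𝕜 := 𝕜) A x) = x := by
  rw [← mul_apply_eq_comp, ← map_mul,
    nonsing_inv_mul A ((isUnit_iff_isUnit_det A).1 hA), map_one, one_apply_eq_self]

theorem toEuclideanCLM_apply_nonsing_inv_apply (hA : IsUnit A) (x : EuclideanSpace 𝕜 n) :
    toEuclideanCLM (𝕜 := 𝕜) A (toEuclideanCLM (𝕜 := 𝕜) A⁻¹ x) = x := by
  rw [← mul_apply_eq_comp, ← map_mul,
    mul_nonsing_inv A ((isUnit_iff_isUnit_det A).1 hA), map_one, one_apply_eq_self]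

end Matrix

theorem stmt_5_general (N : ℕ) (A : Matrix (Fin N) (Fin N) ℂ) (hA : A.IsHermitian)
    (hAinv : IsUnit A)
    (b : EuclideanSpace ℂ (Fin N)) (hb : ‖b‖ = 1)
    (L : EuclideanSpace ℂ (Fin N) → ℝ)
    (hL : ∀ x, L x =
        (inner ℂ x (Matrix.toEuclideanCLM (𝕜 := ℂ) (A * A) x) : ℂ).re
          - ‖inner ℂ b (Matrix.toEuclideanCLM (𝕜 := ℂ) A x)‖ ^ 2) :
    ∀ x : EuclideanSpace ℂ (Fin N), ‖x‖ = 1 →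
      0 ≤ L x ∧
        (L x = 0 ↔ ∃ c : ℂ, ‖c‖ = 1 ∧
          x = c • (‖Matrix.toEuclideanCLM (𝕜 := ℂ) A⁻¹ b‖⁻¹ •
            Matrix.toEuclideanCLM (𝕜 := ℂ) A⁻¹ b)) := by
  intro x hx
  set T := Matrix.toEuclideanCLM (𝕜 := ℂ) A
  set S := Matrix.toEuclideanCLM (𝕜 := ℂ) A⁻¹
  have hT : IsSelfAdjoint T := hA.isSelfAdjoint.map _
  have hLx : L x = ‖T x - ⟪b, T x⟫_ℂ • b‖ ^ 2 := by
    rw [hL, map_mul, ContinuousLinearMap.mul_def, norm_sub_inner_smul_sq hb,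
      T.apply_norm_sq_eq_inner_adjoint_right, hT.adjoint_eq]
    rfl
  refine ⟨hLx ▸ by positivity, ?_⟩
  rw [hLx, sq_eq_zero_iff, norm_eq_zero, sub_inner_smul_eq_zero_iff hb]
  refine (apply_mem_span_singleton_iff (f := T) (g := S)
    (Matrix.toEuclideanCLM_nonsing_inv_apply_apply hAinv)
    (Matrix.toEuclideanCLM_apply_nonsing_inv_apply hAinv)).trans ?_
  rw [mem_span_singleton_iff_exists_norm_eq_one_smul hx]
  simp only [RCLike.real_smul_eq_coe_smul (K := ℂ)]

/-- for invertible Hermitian `A` with operator norm at most 1 and a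
unit vector `b`, the Hamiltonian loss `L_H(x) = ⟨x, A²x⟩ − |⟨b, Ax⟩|²` is
nonnegative on unit vectors and vanishes exactly at the unit multiples of
`A⁻¹b/‖A⁻¹b‖`. -/
theorem stmt_5 (N : ℕ) (A : Matrix (Fin N) (Fin N) ℂ) (hA : A.IsHermitian)
    (hAinv : IsUnit A)
    (hAnorm : ‖Matrix.toEuclideanCLM (𝕜 := ℂ) A‖ ≤ 1)
    (b : EuclideanSpace ℂ (Fin N)) (hb : ‖b‖ = 1)
    (L : EuclideanSpace ℂ (Fin N) → ℝ)
    (hL : ∀ x, L x =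
        (inner ℂ x (Matrix.toEuclideanCLM (𝕜 := ℂ) (A * A) x) : ℂ).re
          - ‖inner ℂ b (Matrix.toEuclideanCLM (𝕜 := ℂ) A x)‖ ^ 2) :
    ∀ x : EuclideanSpace ℂ (Fin N), ‖x‖ = 1 →
      0 ≤ L x ∧
        (L x = 0 ↔ ∃ c : ℂ, ‖c‖ = 1 ∧
          x = c • (‖Matrix.toEuclideanCLM (𝕜 := ℂ) A⁻¹ b‖⁻¹ •
            Matrix.toEuclideanCLM (𝕜 := ℂ) A⁻¹ b)) :=
  stmt_5_general N A hA hAinv b hb L hL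
end

section
/- Let A be Hermitian with ‖A‖ ≤ 1, b a unit vector, and suppose there exists a polynomial p of degree at most d and ε ∈ (0,1) with sup_{x∈[−1,1]} |p(x) − 2x/(2x²+1)| ≤ η. Then the Tikhonov loss satisfies L_T(p(A)b) ≤ min_{x∈ℂ^N} L_T(x) + (3/2)η², where L_T(x) = (1/2)‖x‖² + ‖Ax − b‖². -/
/-!
Diagonalise `A` in an orthonormal eigenbasis. There the loss splits into independent scalar
problems `½‖z‖² + ‖λz - c‖²`, one per eigenvalue `λ ∈ [-1, 1]`, where `c` is the coordinate of
`b`. Completing the square, each equals `‖c‖²/(2λ²+1) + (λ² + ½)‖z - y c‖²` with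
`y = 2λ/(2λ²+1)`, so `‖c‖²/(2λ²+1)` is a lower bound for any `z`, while `p(A)b` has coordinate
`z = p(λ) c`, which exceeds that bound by at most `(3/2) η² ‖c‖²`. Summing with `∑ ‖c‖² = ‖b‖² = 1`
gives the claim.
-/

open scoped Matrix
open Polynomial

section CompletingSquare

variable {F : Type*} [NormedAddCommGroup F] [InnerProductSpace ℝ F]

theorem half_sq_norm_add_sq_norm_smul_sub (l : ℝ) (z c : F) :
    1 / 2 * ‖z‖ ^ 2 + ‖l • z - c‖ ^ 2 =
      ‖c‖ ^ 2 / (2 * l ^ 2 + 1) + (l ^ 2 + 1 / 2) * ‖z - (2 * l / (2 * l ^ 2 + 1)) • c‖ ^ 2 := by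
  simp only [norm_sub_sq_real, norm_smul, mul_pow, Real.norm_eq_abs, sq_abs,
    real_inner_smul_left, real_inner_smul_right]
  field_simp
  ring

theorem sq_norm_div_le_half_sq_norm_add (l : ℝ) (z c : F) :
    ‖c‖ ^ 2 / (2 * l ^ 2 + 1) ≤ 1 / 2 * ‖z‖ ^ 2 + ‖l • z - c‖ ^ 2 := by
  rw [half_sq_norm_add_sq_norm_smul_sub]
  exact le_add_of_nonneg_right (by positivity)

theorem half_sq_norm_smul_add_le {l t η : ℝ} (hl : |l| ≤ 1)
    (ht : |t - 2 * l / (2 * l ^ 2 + 1)| ≤ η) (c : F) :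
    1 / 2 * ‖t • c‖ ^ 2 + ‖l • t • c - c‖ ^ 2 ≤
      ‖c‖ ^ 2 / (2 * l ^ 2 + 1) + 3 / 2 * η ^ 2 * ‖c‖ ^ 2 := by
  rw [half_sq_norm_add_sq_norm_smul_sub, ← sub_smul, norm_smul, mul_pow, Real.norm_eq_abs,
    sq_abs]
  have hl2 : l ^ 2 + 1 / 2 ≤ 3 / 2 := by nlinarith [sq_abs l, abs_nonneg l]
  have ht2 : (t - 2 * l / (2 * l ^ 2 + 1)) ^ 2 ≤ η ^ 2 :=
    sq_le_sq' (abs_le.1 ht).1 (abs_le.1 ht).2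
  have := mul_le_mul hl2 (mul_le_mul_of_nonneg_right ht2 (sq_nonneg ‖c‖)) (by positivity)
    (by norm_num)
  linarith

end CompletingSquare

section Eigenbasis

variable {𝕜 E ι : Type*} [RCLike 𝕜] [NormedAddCommGroup E] [InnerProductSpace 𝕜 E] [Fintype ι]

theorem ContinuousLinearMap.aeval_apply_of_apply_eq_smul {T : E →L[𝕜] E} {μ : 𝕜} {v : E}
    (h : T v = μ • v) (q : 𝕜[X]) : aeval T q v = q.eval μ • v := by
  induction q using Polynomial.induction_on with
  | C a => simp [Algebra.algebraMap_eq_smul_one]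
  | add f g hf hg => simp [hf, hg, add_smul]
  | monomial n a ih =>
    rw [pow_succ, ← mul_assoc, map_mul, mul_apply_eq_comp, aeval_X, h, map_smul, ih]
    simp only [smul_smul, eval_mul, eval_X, eval_pow, eval_C, mul_comm]

theorem ContinuousLinearMap.norm_le_opNorm_of_apply_eq_smul {T : E →L[𝕜] E} {μ : 𝕜} {v : E}
    (hv : v ≠ 0) (h : T v = μ • v) : ‖μ‖ ≤ ‖T‖ := by
  have := T.le_opNorm v
  rw [h, norm_smul] at this
  exact le_of_mul_le_mul_right this (norm_pos_iff.2 hv)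

theorem OrthonormalBasis.repr_apply_of_apply_eq_smul (B : OrthonormalBasis ι 𝕜 E)
    {S : E →L[𝕜] E} {f : ι → 𝕜} (hS : ∀ j, S (B j) = f j • B j) (v : E) (i : ι) :
    B.repr (S v) i = f i * B.repr v i := by
  classical
  conv_lhs => rw [← B.sum_repr v]
  simp [hS, OrthonormalBasis.repr_self, Pi.single_apply, mul_comm]

theorem OrthonormalBasis.sq_norm_eq_sum (B : OrthonormalBasis ι 𝕜 E) (v : E) :
    ‖v‖ ^ 2 = ∑ i, ‖B.repr v i‖ ^ 2 := by
  rw [← B.repr.norm_map v, EuclideanSpace.norm_sq_eq]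

noncomputable def tikhonovLoss (T : E →L[𝕜] E) (b x : E) : ℝ :=
  1 / 2 * ‖x‖ ^ 2 + ‖T x - b‖ ^ 2

theorem tikhonovLoss_eq_sum (B : OrthonormalBasis ι 𝕜 E) {T : E →L[𝕜] E} {μ : ι → ℝ}
    (hT : ∀ i, T (B i) = (μ i : 𝕜) • B i) (b x : E) :
    tikhonovLoss T b x =
      ∑ i, (1 / 2 * ‖B.repr x i‖ ^ 2 + ‖μ i • B.repr x i - B.repr b i‖ ^ 2) := by
  rw [tikhonovLoss, B.sq_norm_eq_sum, B.sq_norm_eq_sum, Finset.mul_sum,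
    ← Finset.sum_add_distrib]
  simp only [map_sub, PiLp.sub_apply, B.repr_apply_of_apply_eq_smul hT,
    RCLike.real_smul_eq_coe_mul]

theorem tikhonovLoss_aeval_le [FiniteDimensional 𝕜 E] {T : E →L[𝕜] E}
    (hT : (T : E →ₗ[𝕜] E).IsSymmetric) (hT1 : ‖T‖ ≤ 1) {η : ℝ} {p : ℝ[X]}
    (hp : ∀ x ∈ Set.Icc (-1 : ℝ) 1, |p.eval x - 2 * x / (2 * x ^ 2 + 1)| ≤ η) (b x : E) :
    tikhonovLoss T b (aeval T (p.map (algebraMap ℝ 𝕜)) b) ≤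
      tikhonovLoss T b x + 3 / 2 * η ^ 2 * ‖b‖ ^ 2 := by
  set B := hT.eigenvectorBasis rfl
  set μ := hT.eigenvalues rfl
  have hTB : ∀ i, T (B i) = (μ i : 𝕜) • B i := hT.apply_eigenvectorBasis rfl
  have hμ (i) : |μ i| ≤ 1 := by
    rw [← RCLike.norm_ofReal (K := 𝕜)]
    exact (T.norm_le_opNorm_of_apply_eq_smul (B.orthonormal.ne_zero i) (hTB i)).trans hT1
  have hpB (i) : aeval T (p.map (algebraMap ℝ 𝕜)) (B i) = ((p.eval (μ i) : ℝ) : 𝕜) • B i := by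
    rw [T.aeval_apply_of_apply_eq_smul (hTB i), eval_map, ← RCLike.algebraMap_eq_ofReal,
      eval₂_at_apply]
  rw [tikhonovLoss_eq_sum B hTB, tikhonovLoss_eq_sum B hTB, B.sq_norm_eq_sum, Finset.mul_sum,
    ← Finset.sum_add_distrib]
  refine Finset.sum_le_sum fun i _ => ?_
  rw [B.repr_apply_of_apply_eq_smul hpB, ← RCLike.real_smul_eq_coe_mul]
  calc _ ≤ ‖B.repr b i‖ ^ 2 / (2 * μ i ^ 2 + 1) + 3 / 2 * η ^ 2 * ‖B.repr b i‖ ^ 2 :=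
        half_sq_norm_smul_add_le (hμ i) (hp _ (abs_le.1 (hμ i))) _
    _ ≤ _ := by gcongr; exact sq_norm_div_le_half_sq_norm_add _ _ _

end Eigenbasis

theorem stmt_14_general (N : ℕ) (A : Matrix (Fin N) (Fin N) ℂ) (hA : A.IsHermitian)
    (hAnorm : ‖Matrix.toEuclideanCLM (𝕜 := ℂ) A‖ ≤ 1)
    (b : EuclideanSpace ℂ (Fin N)) (hb : ‖b‖ = 1)
    (L : EuclideanSpace ℂ (Fin N) → ℝ)
    (hL : ∀ x, L x = (1 / 2) * ‖x‖ ^ 2 +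
        ‖Matrix.toEuclideanCLM (𝕜 := ℂ) A x - b‖ ^ 2)
    (η : ℝ)
    (p : Polynomial ℝ)
    (happrox : ∀ x ∈ Set.Icc (-1 : ℝ) 1,
      |p.eval x - 2 * x / (2 * x ^ 2 + 1)| ≤ η) :
    L (Matrix.toEuclideanCLM (𝕜 := ℂ)
        (Polynomial.aeval A (p.map (algebraMap ℝ ℂ))) b) ≤
      (⨅ x : EuclideanSpace ℂ (Fin N), L x) + (3 / 2) * η ^ 2 := by
  have hsymm : (Matrix.toEuclideanCLM (𝕜 := ℂ) A :
      EuclideanSpace ℂ (Fin N) →ₗ[ℂ] EuclideanSpace ℂ (Fin N)).IsSymmetric := by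
    rwa [Matrix.coe_toEuclideanCLM_eq_toEuclideanLin, Matrix.isSymmetric_toEuclideanLin_iff]
  rw [← sub_le_iff_le_add, ← aeval_algHom_apply]
  refine le_ciInf fun x => ?_
  have := tikhonovLoss_aeval_le hsymm hAnorm happrox b x
  simp only [tikhonovLoss, hb, ← hL] at this
  linarith

/-- if `A` is Hermitian with operator norm at most 1, `b` is a
unit vector, and `p` is a real polynomial of degree at most `d` with
`sup_{x∈[−1,1]} |p(x) − 2x/(2x²+1)| ≤ η`, then the Tikhonov loss satisfies
`L_T(p(A)b) ≤ min_x L_T(x) + (3/2)η²`. -/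
theorem stmt_14 (N d : ℕ) (A : Matrix (Fin N) (Fin N) ℂ) (hA : A.IsHermitian)
    (hAnorm : ‖Matrix.toEuclideanCLM (𝕜 := ℂ) A‖ ≤ 1)
    (b : EuclideanSpace ℂ (Fin N)) (hb : ‖b‖ = 1)
    (L : EuclideanSpace ℂ (Fin N) → ℝ)
    (hL : ∀ x, L x = (1 / 2) * ‖x‖ ^ 2 +
        ‖Matrix.toEuclideanCLM (𝕜 := ℂ) A x - b‖ ^ 2)
    (η : ℝ) (hη : η ∈ Set.Ioo (0 : ℝ) 1)
    (p : Polynomial ℝ) (hdeg : p.natDegree ≤ d)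
    (happrox : ∀ x ∈ Set.Icc (-1 : ℝ) 1,
      |p.eval x - 2 * x / (2 * x ^ 2 + 1)| ≤ η) :
    L (Matrix.toEuclideanCLM (𝕜 := ℂ)
        (Polynomial.aeval A (p.map (algebraMap ℝ ℂ))) b) ≤
      (⨅ x : EuclideanSpace ℂ (Fin N), L x) + (3 / 2) * η ^ 2 :=
  stmt_14_general N A hA hAnorm b hb L hL η p happrox
end

section
/- Let v₀, v₁ ∈ ℂ^N be unit vectors and O = U†DU a Hermitian N×N matrix with U unitary and D real diagonal. Set ξ = (1/2)(e₀ ⊗ U(v₀ + v₁) + e₁ ⊗ U(v₀ − v₁)). Then ⟨ξ, (Z ⊗ D) ξ⟩ = Re⟨v₀, O v₁⟩. -/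
/-!
With `a = U v₀` and `b = U v₁` the two branches of `ξ` carry `(a ± b) / 2`, and by polarization
`|(aᵢ + bᵢ)/2|² - |(aᵢ - bᵢ)/2|² = Re (conj aᵢ * bᵢ)`. Weighting by the real `dᵢ` and summing gives
`Re ⟪a, D b⟫ = Re ⟪v₀, U†DU v₁⟫`.
-/

open scoped Matrix ComplexConjugate
open RCLike

theorem RCLike.re_conj_mul_eq_norm_half_add_sq_sub {𝕜 : Type*} [RCLike 𝕜] (x y : 𝕜) :
    re (conj x * y) = ‖(x + y) / 2‖ ^ 2 - ‖(x - y) / 2‖ ^ 2 := by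
  rw [← inner_apply', re_inner_eq_norm_add_mul_self_sub_norm_sub_mul_self_div_four, norm_div,
    norm_div, norm_ofNat]
  ring

namespace Matrix

variable {𝕜 ι : Type*} [RCLike 𝕜] [Fintype ι] [DecidableEq ι]

theorem inner_toEuclideanCLM_conjTranspose_mul_mul (A B : Matrix ι ι 𝕜)
    (x y : EuclideanSpace 𝕜 ι) :
    inner 𝕜 x (toEuclideanCLM (𝕜 := 𝕜) (Aᴴ * B * A) y) =
      inner 𝕜 (toEuclideanCLM (𝕜 := 𝕜) A x)
        (toEuclideanCLM (𝕜 := 𝕜) B (toEuclideanCLM (𝕜 := 𝕜) A y)) := by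
  rw [mul_assoc, map_mul, ← star_eq_conjTranspose, map_star, ContinuousLinearMap.star_eq_adjoint,
    map_mul, mul_apply_eq_comp, mul_apply_eq_comp, ContinuousLinearMap.adjoint_inner_right]

theorem re_inner_toEuclideanCLM_diagonal_ofReal (d : ι → ℝ) (x y : EuclideanSpace 𝕜 ι) :
    re (inner 𝕜 x (toEuclideanCLM (𝕜 := 𝕜) (diagonal fun i => (d i : 𝕜)) y)) =
      ∑ i, d i * re (conj (x i) * y i) := by
  simp only [PiLp.inner_apply, ofLp_toEuclideanCLM, mulVec_diagonal, inner_apply', map_sum]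
  refine Finset.sum_congr rfl fun i _ => ?_
  rw [mul_left_comm, re_ofReal_mul]

end Matrix

theorem stmt_17_general (N : ℕ) (v₀ v₁ : EuclideanSpace ℂ (Fin N))
    (U : Matrix (Fin N) (Fin N) ℂ)
    (d : Fin N → ℝ)
    (O : Matrix (Fin N) (Fin N) ℂ)
    (hO : O = Uᴴ * Matrix.diagonal (fun i => (d i : ℂ)) * U)
    (ξ : Fin 2 → Fin N → ℂ)
    (hξ0 : ∀ i, ξ 0 i = U.mulVec (fun j => (v₀ j + v₁ j) / 2) i)
    (hξ1 : ∀ i, ξ 1 i = U.mulVec (fun j => (v₀ j - v₁ j) / 2) i) :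
    (∑ i, d i * ‖ξ 0 i‖ ^ 2) -
        (∑ i, d i * ‖ξ 1 i‖ ^ 2) =
      (inner ℂ v₀ (Matrix.toEuclideanCLM (𝕜 := ℂ) O v₁) : ℂ).re := by
  set a := Matrix.toEuclideanCLM (𝕜 := ℂ) U v₀
  set b := Matrix.toEuclideanCLM (𝕜 := ℂ) U v₁
  have hξ0_eq : ∀ i, ξ 0 i = (a i + b i) / 2 := fun i => by
    simp only [hξ0, a, b, Matrix.mulVec, dotProduct, Matrix.ofLp_toEuclideanCLM, mul_add,
      Finset.sum_add_distrib, add_div, Finset.sum_div, mul_div_assoc]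
  have hξ1_eq : ∀ i, ξ 1 i = (a i - b i) / 2 := fun i => by
    simp only [hξ1, a, b, Matrix.mulVec, dotProduct, Matrix.ofLp_toEuclideanCLM, mul_sub,
      Finset.sum_sub_distrib, sub_div, Finset.sum_div, mul_div_assoc]
  rw [hO, Matrix.inner_toEuclideanCLM_conjTranspose_mul_mul, ← RCLike.re_to_complex,
    ← RCLike.ofReal_eq_complex_ofReal, Matrix.re_inner_toEuclideanCLM_diagonal_ofReal,
    ← Finset.sum_sub_distrib]
  refine Finset.sum_congr rfl fun i _ => ?_
  rw [hξ0_eq, hξ1_eq, RCLike.re_conj_mul_eq_norm_half_add_sq_sub, mul_sub]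

/-- modified Hadamard test: for unit vectors `v₀, v₁ ∈ ℂ^N`,
`O = U†DU` with `U` unitary and `D` real diagonal, and
`ξ = (1/2)(e₀ ⊗ U(v₀ + v₁) + e₁ ⊗ U(v₀ − v₁))`, one has
`⟨ξ, (Z ⊗ D) ξ⟩ = Re⟨v₀, O v₁⟩`, where the `Z ⊗ D` expectation is written as
the signed, `d`-weighted sum of squared amplitudes. -/
theorem stmt_17 (N : ℕ) (v₀ v₁ : EuclideanSpace ℂ (Fin N))
    (h₀ : ‖v₀‖ = 1) (h₁ : ‖v₁‖ = 1)
    (U : Matrix (Fin N) (Fin N) ℂ) (hU : U ∈ Matrix.unitaryGroup (Fin N) ℂ)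
    (d : Fin N → ℝ)
    (O : Matrix (Fin N) (Fin N) ℂ)
    (hO : O = Uᴴ * Matrix.diagonal (fun i => (d i : ℂ)) * U)
    (ξ : Fin 2 → Fin N → ℂ)
    (hξ0 : ∀ i, ξ 0 i = U.mulVec (fun j => (v₀ j + v₁ j) / 2) i)
    (hξ1 : ∀ i, ξ 1 i = U.mulVec (fun j => (v₀ j - v₁ j) / 2) i) :
    (∑ i, d i * ‖ξ 0 i‖ ^ 2) -
        (∑ i, d i * ‖ξ 1 i‖ ^ 2) =
      (inner ℂ v₀ (Matrix.toEuclideanCLM (𝕜 := ℂ) O v₁) : ℂ).re :=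
  stmt_17_general N v₀ v₁ U d O hO ξ hξ0 hξ1
end
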